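/- Let G be a group with a left-invariant partial order < admitting a left-invariant simply connected extension (∼_u, ∼_l), and let H be a completely convex normal subgroup of G. Then the relation <' is a left-invariant partial order on the quotient group G/H, and (∼_u', ∼_l') is a left-invariant simply connected extension of <'. In particular, G/H admits a left-invariant partial order with a left-invariant simply connected extension. -/

import Mathlib

open Pointwise

namespace PaperSC

variable {S : Type*}

/-- Exactly one of four propositions holds. -/
def ExactlyOne4 (p q r s : Prop) : Prop :=
  (p ∨ q ∨ r ∨ s) ∧ (p → ¬q ∧ ¬r ∧ ¬s) ∧ (q → ¬r ∧ ¬s) ∧ (r → ¬s)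

/-- `x` and `y` are incomparable with respect to the strict order `lt`. -/
def Incomp (lt : S → S → Prop) (x y : S) : Prop :=
  x ≠ y ∧ ¬ lt x y ∧ ¬ lt y x

/-- The reflexive closure of `lt`. -/
def Le' (lt : S → S → Prop) (x y : S) : Prop := x = y ∨ lt x y

/-- `x ∼ᵤ y` : `x` and `y` are incomparable and have a common upper bound. -/
def SimU (lt : S → S → Prop) (x y : S) : Prop :=
  Incomp lt x y ∧ ∃ z, Le' lt x z ∧ Le' lt y z

/-- `x ∼ₗ y` : `x` and `y` are incomparable and have a common lower bound. -/
def SimL (lt : S → S → Prop) (x y : S) : Prop :=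
  Incomp lt x y ∧ ∃ z, Le' lt z x ∧ Le' lt z y

/-- Every incomparable pair has a common upper bound or a common lower bound. -/
def StronglyConnectedRel (lt : S → S → Prop) : Prop :=
  ∀ x y, Incomp lt x y → SimU lt x y ∨ SimL lt x y

/-- Acyclicity: `x ∼ᵤ y` and `x ∼ₗ z` imply `y < z`. -/
def AcyclicRel (lt : S → S → Prop) : Prop :=
  ∀ x y z, SimU lt x y → SimL lt x z → lt y z

/-- `(u, l)` is a simply connected extension of the strict partial order `lt`. -/
structure IsSCExt (lt u l : S → S → Prop) : Prop where
  u_symm : ∀ x y, u x y → u y x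
  l_symm : ∀ x y, l x y → l y x
  exactly_one : ∀ x y, x ≠ y → ExactlyOne4 (lt x y) (lt y x) (u x y) (l x y)
  u_of_ub : ∀ x y, Incomp lt x y → (∃ z, Le' lt x z ∧ Le' lt y z) → u x y
  l_of_lb : ∀ x y, Incomp lt x y → (∃ z, Le' lt z x ∧ Le' lt z y) → l x y
  acyclic : ∀ x y z, u x y → l x z → lt y z

/-- `b` is between `a` and `c` (with respect to `lt` and the extension `(u, l)`). -/
def Btwn (lt u l : S → S → Prop) (a c b : S) : Prop :=
  (lt a c ∧ ((lt a b ∧ lt b c) ∨ (u a b ∧ l b c))) ∨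
  (lt c a ∧ ((lt c b ∧ lt b a) ∨ (u c b ∧ l b a))) ∨
  (l a c ∧ ((l a b ∧ lt b c) ∨ (l c b ∧ lt b a))) ∨
  (u a c ∧ ((u a b ∧ lt c b) ∨ (u c b ∧ lt a b)))

/-- The between set `B_{a,b}`; it equals `{a}` when `a = b`. -/
def BSet (lt u l : S → S → Prop) (a b : S) : Set S :=
  {a, b} ∪ {x | a ≠ b ∧ Btwn lt u l a b x}

/-- The set `A` is totally ordered by `lt`. -/
def IsChainRel (lt : S → S → Prop) (A : Set S) : Prop :=
  ∀ p ∈ A, ∀ q ∈ A, p = q ∨ lt p q ∨ lt q p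

/-- `x O y` iff `B_{x,y}` is totally ordered by `lt`. -/
def ORel (lt u l : S → S → Prop) (x y : S) : Prop :=
  IsChainRel lt (BSet lt u l x y)

/-- The extension is rectifiable: every between set is a finite union of `O`-classes. -/
def Rectifiable (lt u l : S → S → Prop) : Prop :=
  ∀ a b : S, a ≠ b → ∃ F : Finset S,
    (↑F : Set S) ⊆ BSet lt u l a b ∧
    ∀ x ∈ BSet lt u l a b, ∃ c ∈ F, ORel lt u l x c

/-- A relation on a group is left-invariant. -/
def LeftInvariant {G : Type*} [Group G] (r : G → G → Prop) : Prop :=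
  ∀ f g h : G, r g h → r (f * g) (f * h)

/-- A subgroup `H` is completely convex: between sets of elements of `H` lie in `H`. -/
def CompletelyConvex {G : Type*} [Group G] (lt u l : G → G → Prop) (H : Subgroup G) : Prop :=
  ∀ h1 ∈ H, ∀ h2 ∈ H, BSet lt u l h1 h2 ⊆ (H : Set G)

/-- The relation induced on the quotient `G ⧸ H` by a relation `r` on `G`:
`g₁H r' g₂H` iff the cosets are distinct and `r g₁ (g₂ h)` for some `h ∈ H`. -/
def QRel {G : Type*} [Group G] (r : G → G → Prop) (H : Subgroup G) (x y : G ⧸ H) : Prop :=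
  x ≠ y ∧ ∃ g1 g2 : G, (g1 : G ⧸ H) = x ∧ (g2 : G ⧸ H) = y ∧ ∃ h ∈ H, r g1 (g2 * h)

/-! For `p ∉ H` and `k ∈ H`, complete convexity of `H` forces `p` to stand to `k` in the
same relation (`<`, `>`, `∼ᵤ` or `∼ₗ`) as to `1`: in each mismatched case either the axioms fail
outright or an element outside `H` lies between two elements of `H`. The hardest case, `p ∼ᵤ 1`
with `p < k`, compares `1` with the conjugate `q = p⁻¹kp ∈ H`, which is where normality enters.
Translating on the left, the relation between `a` and `c` depends only on the cosets `aH ≠ cH`, so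
the quotient relations are just the relations between arbitrary representatives and every axiom
passes to `G ⧸ H`. Reversing the order while swapping `∼ᵤ` and `∼ₗ` preserves all hypotheses,
which halves the cases. -/

section Order

variable {lt u l : S → S → Prop} {x y z : S}

theorem ExactlyOne4.swap {p q r s : Prop} (h : ExactlyOne4 p q r s) : ExactlyOne4 q p s r := by
  unfold ExactlyOne4 at *
  tauto

theorem incomp_flip : Incomp (flip lt) x y ↔ Incomp lt x y := by
  unfold Incomp flip
  tauto

theorem le'_flip : Le' (flip lt) x y ↔ Le' lt y x :=
  or_congr_left eq_comm

theorem Incomp.lt_and_lt_of_upper (h : Incomp lt x y) (hx : Le' lt x z) (hy : Le' lt y z) :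
    lt x z ∧ lt y z := by
  obtain ⟨hne, hxy, hyx⟩ := h
  rcases hx with rfl | hx <;> rcases hy with rfl | hy
  exacts [absurd rfl hne, absurd hy hyx, absurd hx hxy, ⟨hx, hy⟩]

theorem Incomp.lt_and_lt_of_lower (h : Incomp lt x y) (hx : Le' lt z x) (hy : Le' lt z y) :
    lt z x ∧ lt z y := by
  obtain ⟨hne, hxy, hyx⟩ := h
  rcases hx with rfl | hx <;> rcases hy with rfl | hy
  exacts [absurd rfl hne, absurd hy hxy, absurd hx hyx, ⟨hx, hy⟩]

namespace IsSCExt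

theorem exhaustive (h : IsSCExt lt u l) (hne : x ≠ y) : lt x y ∨ lt y x ∨ u x y ∨ l x y :=
  (h.exactly_one x y hne).1

theorem not_u_of_lt (h : IsSCExt lt u l) (hne : x ≠ y) (hlt : lt x y) : ¬ u x y :=
  ((h.exactly_one x y hne).2.1 hlt).2.1

theorem not_l_of_lt (h : IsSCExt lt u l) (hne : x ≠ y) (hlt : lt x y) : ¬ l x y :=
  ((h.exactly_one x y hne).2.1 hlt).2.2

theorem not_u_of_gt (h : IsSCExt lt u l) (hne : x ≠ y) (hlt : lt y x) : ¬ u x y :=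
  ((h.exactly_one x y hne).2.2.1 hlt).1

theorem not_l_of_gt (h : IsSCExt lt u l) (hne : x ≠ y) (hlt : lt y x) : ¬ l x y :=
  ((h.exactly_one x y hne).2.2.1 hlt).2

theorem not_l_of_u (h : IsSCExt lt u l) (hne : x ≠ y) (hu : u x y) : ¬ l x y :=
  (h.exactly_one x y hne).2.2.2 hu

theorem incomp_of_l (h : IsSCExt lt u l) (hne : x ≠ y) (hl : l x y) : Incomp lt x y :=
  ⟨hne, fun hlt => h.not_l_of_lt hne hlt hl, fun hlt => h.not_l_of_gt hne hlt hl⟩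

theorem dual (h : IsSCExt lt u l) : IsSCExt (flip lt) l u where
  u_symm := h.l_symm
  l_symm := h.u_symm
  exactly_one x y hne := (h.exactly_one x y hne).swap
  u_of_ub x y hxy hub :=
    h.l_of_lb x y (incomp_flip.1 hxy) (hub.imp fun _ hz => ⟨le'_flip.1 hz.1, le'_flip.1 hz.2⟩)
  l_of_lb x y hxy hlb :=
    h.u_of_ub x y (incomp_flip.1 hxy) (hlb.imp fun _ hz => ⟨le'_flip.1 hz.1, le'_flip.1 hz.2⟩)
  acyclic x y z hl hu := h.acyclic x z y hu hl

theorem not_lt_of_l_of_lt (h : IsSCExt lt u l) (hne : x ≠ y) (hl : l x y) (hxz : lt x z) :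
    ¬ lt y z := fun hyz =>
  h.not_l_of_u hne (h.u_of_ub x y (h.incomp_of_l hne hl) ⟨z, Or.inr hxz, Or.inr hyz⟩) hl

theorem not_gt_of_u_of_gt (h : IsSCExt lt u l) (hne : x ≠ y) (hu : u x y) (hzx : lt z x) :
    ¬ lt z y :=
  h.dual.not_lt_of_l_of_lt hne hu hzx

theorem btwn_of_btwn_flip (h : IsSCExt lt u l) {a c b : S} (hb : Btwn (flip lt) l u a c b) :
    Btwn lt u l a c b := by
  rcases hb with ⟨h1, ⟨h2, h3⟩ | ⟨h2, h3⟩⟩ | ⟨h1, ⟨h2, h3⟩ | ⟨h2, h3⟩⟩ | hb | hb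
  · exact Or.inr (Or.inl ⟨h1, Or.inl ⟨h3, h2⟩⟩)
  · exact Or.inr (Or.inl ⟨h1, Or.inr ⟨h.u_symm _ _ h3, h.l_symm _ _ h2⟩⟩)
  · exact Or.inl ⟨h1, Or.inl ⟨h3, h2⟩⟩
  · exact Or.inl ⟨h1, Or.inr ⟨h.u_symm _ _ h3, h.l_symm _ _ h2⟩⟩
  · exact Or.inr (Or.inr (Or.inr hb))
  · exact Or.inr (Or.inr (Or.inl hb))

theorem bSet_flip_subset (h : IsSCExt lt u l) (a b : S) :
    BSet (flip lt) l u a b ⊆ BSet lt u l a b :=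
  Set.union_subset_union_right _ fun _ hx => ⟨hx.1, h.btwn_of_btwn_flip hx.2⟩

end IsSCExt

end Order

section Group

variable {G : Type*} [Group G] {lt u l : G → G → Prop} {H : Subgroup G}

theorem Btwn.mul_left (hlt : LeftInvariant lt) (hu : LeftInvariant u) (hl : LeftInvariant l)
    (f : G) {a c b : G} (h : Btwn lt u l a c b) : Btwn lt u l (f * a) (f * c) (f * b) := by
  unfold Btwn at *
  have := hlt f; have := hu f; have := hl f
  aesop

theorem CompletelyConvex.mem_of_btwn (hH : CompletelyConvex lt u l H) {h₁ h₂ g : G} (h₁H : h₁ ∈ H)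
    (h₂H : h₂ ∈ H) (hne : h₁ ≠ h₂) (hb : Btwn lt u l h₁ h₂ g) : g ∈ H :=
  hH h₁ h₁H h₂ h₂H (Or.inr ⟨hne, hb⟩)

theorem CompletelyConvex.dual (h : IsSCExt lt u l) (hH : CompletelyConvex lt u l H) :
    CompletelyConvex (flip lt) l u H := fun h₁ h₁H h₂ h₂H =>
  (h.bSet_flip_subset h₁ h₂).trans (hH h₁ h₁H h₂ h₂H)

theorem LeftInvariant.qRel [H.Normal] {r : G → G → Prop} (hr : LeftInvariant r) :
    LeftInvariant (QRel r H) := by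
  rintro f _ _ ⟨hne, g₁, g₂, rfl, rfl, h, hh, hrel⟩
  obtain ⟨f, rfl⟩ := QuotientGroup.mk_surjective f
  refine ⟨fun heq => hne (mul_left_cancel heq), f * g₁, f * g₂, rfl, rfl, h, hh, ?_⟩
  simpa only [mul_assoc] using hr f _ _ hrel

def CosetCongrRight (r : G → G → Prop) (H : Subgroup G) : Prop :=
  ∀ ⦃a c d : G⦄, (c : G ⧸ H) = d → (a : G ⧸ H) ≠ c → r a d → r a c

theorem CosetCongrRight.flip_of_symm {r : G → G → Prop} (hr : CosetCongrRight r H)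
    (hsymm : ∀ x y, r x y → r y x) : CosetCongrRight (flip r) H :=
  fun _ _ _ hcd hac hda => hsymm _ _ (hr hcd hac (hsymm _ _ hda))

theorem qRel_mk_iff {r : G → G → Prop} (hr : CosetCongrRight r H)
    (hr' : CosetCongrRight (flip r) H) {a b : G} :
    QRel r H a b ↔ (a : G ⧸ H) ≠ b ∧ r a b := by
  refine ⟨fun ⟨hne, g₁, g₂, hg₁, hg₂, h, hh, hrel⟩ => ⟨hne, ?_⟩,
    fun ⟨hne, hab⟩ => ⟨hne, a, b, rfl, rfl, 1, H.one_mem, by rwa [mul_one]⟩⟩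
  have hg₁b : r g₁ b := hr (by rw [QuotientGroup.mk_mul_of_mem g₂ hh, hg₂]) (hg₁ ▸ hne) hrel
  exact hr' hg₁.symm (fun h => hne h.symm) hg₁b

structure IsLeftInvariantSCOrder (lt u l : G → G → Prop) : Prop extends IsSCExt lt u l where
  irrefl : ∀ x, ¬ lt x x
  trans : ∀ x y z, lt x y → lt y z → lt x z
  lt_inv : LeftInvariant lt
  u_inv : LeftInvariant u
  l_inv : LeftInvariant l

namespace IsLeftInvariantSCOrder

variable {p k : G}

theorem dual (hS : IsLeftInvariantSCOrder lt u l) : IsLeftInvariantSCOrder (flip lt) l u where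
  toIsSCExt := hS.toIsSCExt.dual
  irrefl := hS.irrefl
  trans x y z hxy hyz := hS.trans z y x hyz hxy
  lt_inv f g h := hS.lt_inv f h g
  u_inv := hS.l_inv
  l_inv := hS.u_inv

theorem ne_of_lt (hS : IsLeftInvariantSCOrder lt u l) {x y : G} (h : lt x y) : x ≠ y := by
  rintro rfl
  exact hS.irrefl x h

theorem mem_of_one_lt_of_lt (hS : IsLeftInvariantSCOrder lt u l) (hH : CompletelyConvex lt u l H)
    (hk : k ∈ H) (h1p : lt 1 p) (hpk : lt p k) : p ∈ H :=
  have h1k := hS.trans _ _ _ h1p hpk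
  hH.mem_of_btwn H.one_mem hk (hS.ne_of_lt h1k) (Or.inl ⟨h1k, Or.inl ⟨h1p, hpk⟩⟩)

theorem mem_of_l_one_of_u (hS : IsLeftInvariantSCOrder lt u l) (hH : CompletelyConvex lt u l H)
    (hk : k ∈ H) (hl : l p 1) (hu : u p k) : p ∈ H :=
  have hk1 : lt k 1 := hS.acyclic p k 1 hu hl
  hH.mem_of_btwn hk H.one_mem (hS.ne_of_lt hk1) (Or.inl ⟨hk1, Or.inr ⟨hS.u_symm p k hu, hl⟩⟩)

theorem mem_of_l_one_of_lt (hS : IsLeftInvariantSCOrder lt u l) (hH : CompletelyConvex lt u l H)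
    (hk : k ∈ H) (hl : l p 1) (hpk : lt p k) : p ∈ H := by
  rcases eq_or_ne p 1 with rfl | hp1
  · exact H.one_mem
  rcases eq_or_ne k 1 with rfl | hk1
  · exact (hS.not_l_of_lt hp1 hpk hl).elim
  rcases hS.exhaustive hk1.symm with h1k | hk1' | hu1k | hl1k
  · exact (hS.not_lt_of_l_of_lt hp1 hl hpk h1k).elim
  · exact (hS.not_l_of_lt hp1 (hS.trans _ _ _ hpk hk1') hl).elim
  · exact (hS.irrefl p (hS.trans _ _ _ hpk (hS.acyclic 1 k p hu1k (hS.l_symm p 1 hl)))).elim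
  · exact hH.mem_of_btwn H.one_mem hk hk1.symm
      (Or.inr (Or.inr (Or.inl ⟨hl1k, Or.inl ⟨hS.l_symm p 1 hl, hpk⟩⟩)))

theorem mem_of_u_one_of_lt [hN : H.Normal] (hS : IsLeftInvariantSCOrder lt u l)
    (hH : CompletelyConvex lt u l H) (hk : k ∈ H) (hu : u p 1) (hpk : lt p k) : p ∈ H := by
  rcases eq_or_ne p 1 with rfl | hp1
  · exact H.one_mem
  obtain ⟨q, hq, hpq⟩ : ∃ q ∈ H, p * q = k * p :=
    ⟨p⁻¹ * k * p, by simpa using hN.conj_mem k hk p⁻¹, by group⟩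
  rcases eq_or_ne 1 q with rfl | h1q
  · obtain rfl : k = 1 := by simpa using hpq.symm
    exact (hS.not_u_of_lt hp1 hpk hu).elim
  have hukp : u (k * p) k := by simpa using hS.u_inv k _ _ hu
  rcases hS.exhaustive h1q with h1q' | hq1 | hu1q | hl1q
  · -- `k⁻¹p` is a common lower bound of `p` and `1`
    have h₁ : lt (k⁻¹ * p) p := by simpa [mul_assoc, hpq] using hS.lt_inv (k⁻¹ * p) _ _ h1q'
    have h₂ : lt (k⁻¹ * p) 1 := by simpa using hS.lt_inv k⁻¹ _ _ hpk
    exact (hS.not_gt_of_u_of_gt hp1 hu h₁ h₂).elim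
  · have hkpp : lt (k * p) p := by simpa [hpq] using hS.lt_inv p _ _ hq1
    have hkpk := hS.trans _ _ _ hkpp hpk
    exact (hS.not_u_of_lt (hS.ne_of_lt hkpk) hkpk hukp).elim
  · -- `k` lies between `p` and `kp = pq`, so `p⁻¹k` lies between `1` and `q`
    have hupkp : u p (p * q) := by simpa using hS.u_inv p _ _ hu1q
    have hb : Btwn lt u l p (p * q) k :=
      Or.inr (Or.inr (Or.inr ⟨hupkp, Or.inr ⟨hpq ▸ hukp, hpk⟩⟩))
    have hpk' : p⁻¹ * k ∈ H := hH.mem_of_btwn H.one_mem hq h1q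
      (by simpa using hb.mul_left hS.lt_inv hS.u_inv hS.l_inv p⁻¹)
    simpa using (H.mul_mem_cancel_right hk).1 hpk'
  · -- `kp` lies between `1` and `k²`
    have hlpkp : l p (k * p) := by simpa [hpq] using hS.l_inv p _ _ hl1q
    have h1kp : lt 1 (k * p) := hS.acyclic p 1 (k * p) hu hlpkp
    have hkpkk : lt (k * p) (k * k) := hS.lt_inv k _ _ hpk
    have h1kk := hS.trans _ _ _ h1kp hkpkk
    exact (H.mul_mem_cancel_left hk).1 <| hH.mem_of_btwn H.one_mem (H.mul_mem hk hk)
      (hS.ne_of_lt h1kk) (Or.inl ⟨h1kk, Or.inl ⟨h1kp, hkpkk⟩⟩)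

variable [H.Normal]

theorem cosetCongrRight_lt (hS : IsLeftInvariantSCOrder lt u l) (hH : CompletelyConvex lt u l H) :
    CosetCongrRight lt H := by
  intro a c d hcd hac had
  have hk : c⁻¹ * d ∈ H := QuotientGroup.eq.1 hcd
  have hp : c⁻¹ * a ∉ H := fun h => hac (QuotientGroup.eq.2 h).symm
  have hpk : lt (c⁻¹ * a) (c⁻¹ * d) := hS.lt_inv _ _ _ had
  rcases hS.exhaustive (ne_of_apply_ne _ hac) with h | h | h | h
  · exact h
  · exact absurd (hS.mem_of_one_lt_of_lt hH hk (by simpa using hS.lt_inv c⁻¹ _ _ h) hpk) hp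
  · exact absurd (hS.mem_of_u_one_of_lt hH hk (by simpa using hS.u_inv c⁻¹ _ _ h) hpk) hp
  · exact absurd (hS.mem_of_l_one_of_lt hH hk (by simpa using hS.l_inv c⁻¹ _ _ h) hpk) hp

theorem cosetCongrRight_u (hS : IsLeftInvariantSCOrder lt u l) (hH : CompletelyConvex lt u l H) :
    CosetCongrRight u H := by
  intro a c d hcd hac had
  have had' : (a : G ⧸ H) ≠ d := hcd ▸ hac
  have hne : a ≠ d := ne_of_apply_ne _ had'
  rcases hS.exhaustive (ne_of_apply_ne _ hac) with h | h | h | h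
  · exact absurd had (hS.not_u_of_lt hne (hS.cosetCongrRight_lt hH hcd.symm had' h))
  · exact absurd had
      (hS.not_u_of_gt hne (hS.dual.cosetCongrRight_lt (hH.dual hS.toIsSCExt) hcd.symm had' h))
  · exact h
  · have hp : c⁻¹ * a ∉ H := fun h => hac (QuotientGroup.eq.2 h).symm
    exact absurd (hS.mem_of_l_one_of_u hH (QuotientGroup.eq.1 hcd)
      (by simpa using hS.l_inv c⁻¹ _ _ h) (hS.u_inv c⁻¹ _ _ had)) hp

theorem qRel_lt_mk_iff (hS : IsLeftInvariantSCOrder lt u l) (hH : CompletelyConvex lt u l H)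
    {a b : G} : QRel lt H a b ↔ (a : G ⧸ H) ≠ b ∧ lt a b :=
  qRel_mk_iff (hS.cosetCongrRight_lt hH) (hS.dual.cosetCongrRight_lt (hH.dual hS.toIsSCExt))

theorem qRel_u_mk_iff (hS : IsLeftInvariantSCOrder lt u l) (hH : CompletelyConvex lt u l H)
    {a b : G} : QRel u H a b ↔ (a : G ⧸ H) ≠ b ∧ u a b :=
  have hu := hS.cosetCongrRight_u hH
  qRel_mk_iff hu (hu.flip_of_symm hS.u_symm)

theorem qRel_l_mk_iff (hS : IsLeftInvariantSCOrder lt u l) (hH : CompletelyConvex lt u l H)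
    {a b : G} : QRel l H a b ↔ (a : G ⧸ H) ≠ b ∧ l a b :=
  have hl := hS.dual.cosetCongrRight_u (hH.dual hS.toIsSCExt)
  qRel_mk_iff hl (hl.flip_of_symm hS.l_symm)

theorem incomp_of_incomp_qRel (hS : IsLeftInvariantSCOrder lt u l)
    (hH : CompletelyConvex lt u l H) {a b : G} (h : Incomp (QRel lt H) a b) : Incomp lt a b :=
  ⟨ne_of_apply_ne _ h.1, fun hab => h.2.1 ((hS.qRel_lt_mk_iff hH).2 ⟨h.1, hab⟩),
    fun hba => h.2.2 ((hS.qRel_lt_mk_iff hH).2 ⟨h.1.symm, hba⟩)⟩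

theorem quotient (hS : IsLeftInvariantSCOrder lt u l) (hH : CompletelyConvex lt u l H) :
    IsLeftInvariantSCOrder (QRel lt H) (QRel u H) (QRel l H) where
  irrefl _ h := h.1 rfl
  trans := by
    intro x y z hxy hyz
    obtain ⟨a, rfl⟩ := QuotientGroup.mk_surjective x
    obtain ⟨b, rfl⟩ := QuotientGroup.mk_surjective y
    obtain ⟨c, rfl⟩ := QuotientGroup.mk_surjective z
    have hab := ((hS.qRel_lt_mk_iff hH).1 hxy).2
    refine (hS.qRel_lt_mk_iff hH).2 ⟨?_, hS.trans a b c hab ((hS.qRel_lt_mk_iff hH).1 hyz).2⟩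
    rintro hac
    rw [← hac, hS.qRel_lt_mk_iff hH] at hyz
    exact hS.irrefl a (hS.trans a b a hab hyz.2)
  lt_inv := hS.lt_inv.qRel
  u_inv := hS.u_inv.qRel
  l_inv := hS.l_inv.qRel
  u_symm x y := by
    obtain ⟨a, rfl⟩ := QuotientGroup.mk_surjective x
    obtain ⟨b, rfl⟩ := QuotientGroup.mk_surjective y
    simp only [hS.qRel_u_mk_iff hH]
    exact fun ⟨hne, hab⟩ => ⟨hne.symm, hS.u_symm a b hab⟩
  l_symm x y := by
    obtain ⟨a, rfl⟩ := QuotientGroup.mk_surjective x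
    obtain ⟨b, rfl⟩ := QuotientGroup.mk_surjective y
    simp only [hS.qRel_l_mk_iff hH]
    exact fun ⟨hne, hab⟩ => ⟨hne.symm, hS.l_symm a b hab⟩
  exactly_one x y hne := by
    obtain ⟨a, rfl⟩ := QuotientGroup.mk_surjective x
    obtain ⟨b, rfl⟩ := QuotientGroup.mk_surjective y
    simpa only [hS.qRel_lt_mk_iff hH, hS.qRel_u_mk_iff hH, hS.qRel_l_mk_iff hH, ne_eq, hne,
      Ne.symm hne, not_false_eq_true, true_and] using hS.exactly_one a b (ne_of_apply_ne _ hne)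
  u_of_ub x y hxy := by
    rintro ⟨z, hxz, hyz⟩
    obtain ⟨a, rfl⟩ := QuotientGroup.mk_surjective x
    obtain ⟨b, rfl⟩ := QuotientGroup.mk_surjective y
    obtain ⟨c, rfl⟩ := QuotientGroup.mk_surjective z
    obtain ⟨hac, hbc⟩ := hxy.lt_and_lt_of_upper hxz hyz
    refine (hS.qRel_u_mk_iff hH).2 ⟨hxy.1, hS.u_of_ub a b (hS.incomp_of_incomp_qRel hH hxy)
      ⟨c, Or.inr ((hS.qRel_lt_mk_iff hH).1 hac).2, Or.inr ((hS.qRel_lt_mk_iff hH).1 hbc).2⟩⟩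
  l_of_lb x y hxy := by
    rintro ⟨z, hzx, hzy⟩
    obtain ⟨a, rfl⟩ := QuotientGroup.mk_surjective x
    obtain ⟨b, rfl⟩ := QuotientGroup.mk_surjective y
    obtain ⟨c, rfl⟩ := QuotientGroup.mk_surjective z
    obtain ⟨hca, hcb⟩ := hxy.lt_and_lt_of_lower hzx hzy
    refine (hS.qRel_l_mk_iff hH).2 ⟨hxy.1, hS.l_of_lb a b (hS.incomp_of_incomp_qRel hH hxy)
      ⟨c, Or.inr ((hS.qRel_lt_mk_iff hH).1 hca).2, Or.inr ((hS.qRel_lt_mk_iff hH).1 hcb).2⟩⟩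
  acyclic x y z hxy hxz := by
    obtain ⟨a, rfl⟩ := QuotientGroup.mk_surjective x
    obtain ⟨b, rfl⟩ := QuotientGroup.mk_surjective y
    obtain ⟨c, rfl⟩ := QuotientGroup.mk_surjective z
    rw [hS.qRel_u_mk_iff hH] at hxy
    refine (hS.qRel_lt_mk_iff hH).2 ⟨?_, hS.acyclic a b c hxy.2 ((hS.qRel_l_mk_iff hH).1 hxz).2⟩
    rintro hbc
    rw [← hbc, hS.qRel_l_mk_iff hH] at hxz
    exact hS.not_l_of_u (ne_of_apply_ne _ hxy.1) hxy.2 hxz.2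

end IsLeftInvariantSCOrder

end Group

/-- The induced relations make `G ⧸ H` a group with a left-invariant partial
order and a left-invariant simply connected extension. -/
theorem stmt10 {G : Type*} [Group G] (lt u l : G → G → Prop)
    (hirr : ∀ x : G, ¬ lt x x)
    (htrans : ∀ x y z : G, lt x y → lt y z → lt x z)
    (hltinv : LeftInvariant lt) (huinv : LeftInvariant u) (hlinv : LeftInvariant l)
    (hsce : IsSCExt lt u l)
    (H : Subgroup G) [H.Normal]
    (hcc : CompletelyConvex lt u l H) :
    (∀ x : G ⧸ H, ¬ QRel lt H x x) ∧
    (∀ x y z : G ⧸ H, QRel lt H x y → QRel lt H y z → QRel lt H x z) ∧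
    LeftInvariant (QRel lt H) ∧
    LeftInvariant (QRel u H) ∧
    LeftInvariant (QRel l H) ∧
    IsSCExt (QRel lt H) (QRel u H) (QRel l H) := by
  have hQ := (IsLeftInvariantSCOrder.mk hsce hirr htrans hltinv huinv hlinv).quotient hcc
  exact ⟨hQ.irrefl, hQ.trans, hQ.lt_inv, hQ.u_inv, hQ.l_inv, hQ.toIsSCExt⟩

end PaperSC
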